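/- arXiv:2603.22045 — 2 statements merged into one kernel-verified Lean document; each statement's English description precedes it below -/
import Mathlib

section
/- Let 0 < r < 1 and let w, w' ∈ 𝒟 be of the same slope with w ≺_alt w' strictly. Then t_{−r}(w) < t_{−r}(w'). -/
/-- A sequence (indexed from 1) over the alphabet {0,1}. -/
def IsBinary (s : ℕ → ℤ) : Prop := ∀ i, s i = 0 ∨ s i = 1

/-- `s` is a Sturmian word of slope `θ` (floor or ceiling form). -/
def IsSturmian (θ : ℝ) (s : ℕ → ℤ) : Prop :=
  Irrational θ ∧ θ ∈ Set.Ioo (0:ℝ) 1 ∧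
    ∃ ρ : ℝ,
      (∀ n : ℕ, 1 ≤ n → s n = ⌊((n:ℝ)+1)*θ+ρ⌋ - ⌊(n:ℝ)*θ+ρ⌋) ∨
      (∀ n : ℕ, 1 ≤ n → s n = ⌈((n:ℝ)+1)*θ+ρ⌉ - ⌈(n:ℝ)*θ+ρ⌉)

/-- The characteristic Sturmian word of slope `θ`. -/
noncomputable def charWord (θ : ℝ) : ℕ → ℤ := fun n => ⌊((n:ℝ)+1)*θ⌋ - ⌊(n:ℝ)*θ⌋

/-- `tval r s = ∑_{i ≥ 1} s i * r ^ i`. -/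
noncomputable def tval (r : ℝ) (s : ℕ → ℤ) : ℝ := ∑' i : ℕ, (s (i+1) : ℝ) * r^(i+1)

/-- Equality of infinite words (positions ≥ 1). -/
def EqW (s s' : ℕ → ℤ) : Prop := ∀ i, 1 ≤ i → s i = s' i

/-- Strict lexicographic order on infinite words (positions ≥ 1). -/
def LexLt (s s' : ℕ → ℤ) : Prop :=
  ∃ n, 1 ≤ n ∧ (∀ i, 1 ≤ i → i < n → s i = s' i) ∧ s n < s' n

def LexLe (s s' : ℕ → ℤ) : Prop := LexLt s s' ∨ EqW s s'

/-- Strict alternate order on infinite words. -/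
def AltLt (s s' : ℕ → ℤ) : Prop :=
  ∃ n, 1 ≤ n ∧ (∀ i, 1 ≤ i → i < n → s i = s' i) ∧ (-1:ℤ)^n * (s' n - s n) = 1

def AltLe (s s' : ℕ → ℤ) : Prop := AltLt s s' ∨ EqW s s'

/-- The doubling map `D(w₁w₂…) = w₁w₁w₂w₂…`. -/
def Dbl (w : ℕ → ℤ) : ℕ → ℤ := fun n => w ((n+1)/2)

/-- The shift map `T(w₁w₂w₃…) = w₂w₃…`. -/
def Shf (w : ℕ → ℤ) : ℕ → ℤ := fun n => w (n+1)

/-- The word `a^l s` : the letter `a` repeated `l` times followed by `s`. -/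
def Prepend (a : ℤ) (l : ℕ) (s : ℕ → ℤ) : ℕ → ℤ := fun n => if n ≤ l then a else s (n - l)

/-- The finite word `u` followed by the infinite word `s`. -/
def Cat (u : List ℤ) (s : ℕ → ℤ) : ℕ → ℤ :=
  fun n => if n ≤ u.length then u.getD (n-1) 0 else s (n - u.length)

/-- The finite word `u` occurs as a contiguous block of `s` (at a position ≥ 1). -/
def Subword (u : List ℤ) (s : ℕ → ℤ) : Prop :=
  ∃ n, 1 ≤ n ∧ ∀ i, i < u.length → s (n + i) = u.getD i 0

/-- `s` is aperiodic: not eventually periodic. -/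
def Aperiodic (s : ℕ → ℤ) : Prop :=
  ¬ ∃ k, 1 ≤ k ∧ ∃ N, 1 ≤ N ∧ ∀ n, N ≤ n → s n = s (n + k)

/-- `w` has slope `θ`: the averages of its letters tend to `θ`. -/
def HasSlope (w : ℕ → ℤ) (θ : ℝ) : Prop :=
  Filter.Tendsto (fun n : ℕ => (∑ i ∈ Finset.Icc 1 n, (w i : ℝ)) / n)
    Filter.atTop (nhds θ)

/-- The class `S` of words of the form `0^l s` or `1^l s` with `s` Sturmian. -/
def MemS (w : ℕ → ℤ) : Prop :=
  ∃ a l s θ, (a = (0:ℤ) ∨ a = 1) ∧ IsSturmian θ s ∧ EqW w (Prepend a l s)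

/-- The class `𝒟` of words of the form `0^l (D s)` or `1^l (D s)` with `s` Sturmian. -/
def MemD (w : ℕ → ℤ) : Prop :=
  ∃ a l s θ, (a = (0:ℤ) ∨ a = 1) ∧ IsSturmian θ s ∧ EqW w (Prepend a l (Dbl s))

/-- The class `𝒫 = D(Σ^ℕ) ∪ T(D(Σ^ℕ))` with `Σ = {0,1}`. -/
def MemP (w : ℕ → ℤ) : Prop :=
  (∃ u, IsBinary u ∧ EqW w (Dbl u)) ∨ (∃ u, IsBinary u ∧ EqW w (Shf (Dbl u)))


/-!
Write `l = 2p + e` with `e ≤ 1`: a word `a^l D(s)` of `𝒟` equals `a^e D(u)` with `u = a^p s`, and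
`t_{-r}(D u) = -((1 - r)/r) ∑ u_k r^{2k}`, `t_{-r}(b v) = -b r - r t_{-r}(v)`.

When both words have the same phase `e`, the alternate order on them becomes the lexicographic order
on the `u`'s, so the claim reduces to monotonicity of `∑ u_k ρ^k` for the lexicographic order on
words `a^p s`, `s` Sturmian of a common slope. Since Sturmian words are balanced, the partial sums
of `u - u'` stay nonnegative after the first difference, and Abel summation concludes.

When the phases differ, comparing the words in the alternate order forces the prepended letter, and
it suffices that `t_{-r}` maps the families `1 D u`, `D u`, `0 D u` into the consecutive intervals
`[-r, -r/(1+r)]`, `[-r/(1+r), 0]`, `[0, r²/(1+r)]`, strictly away from the common endpoints unless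
the two words coincide.
-/

open Finset

/-- `windowSum v m L = v (m + 1) + ⋯ + v (m + L)`. -/
def windowSum (v : ℕ → ℤ) (m L : ℕ) : ℤ := ∑ j ∈ range L, v (m + 1 + j)

section windowSum

variable (v : ℕ → ℤ) (m L : ℕ)

lemma windowSum_zero : windowSum v m 0 = 0 := rfl

lemma windowSum_succ : windowSum v m (L + 1) = windowSum v m L + v (m + 1 + L) :=
  sum_range_succ _ _

lemma windowSum_add (c d : ℕ) :
    windowSum v m (c + d) = windowSum v m c + windowSum v (m + c) d := by
  simp only [windowSum, sum_range_add]
  congr 1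
  exact sum_congr rfl fun j _ => congrArg v (by omega)

variable {v m L}

lemma windowSum_le_windowSum {v' : ℕ → ℤ} (h : ∀ i, m < i → v i ≤ v' i) :
    windowSum v m L ≤ windowSum v' m L :=
  sum_le_sum fun j _ => h _ (by omega)

lemma windowSum_congr {v' : ℕ → ℤ} (h : ∀ i, m < i → i ≤ m + L → v i = v' i) :
    windowSum v m L = windowSum v' m L :=
  sum_congr rfl fun j hj => h _ (by omega) (by simp only [mem_range] at hj; omega)

lemma windowSum_eq_of_eqW {v' : ℕ → ℤ} (h : EqW v v') : windowSum v m L = windowSum v' m L :=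
  windowSum_congr fun i hi _ => h i (by omega)

end windowSum

/-- A rounding function whose error `g x - x` varies by less than `1`, such as `⌊·⌋` and `⌈·⌉`. -/
def IsRounding (g : ℝ → ℤ) : Prop := ∀ x y, |((g x : ℝ) - x) - ((g y : ℝ) - y)| < 1

lemma isRounding_floor : IsRounding Int.floor := by
  intro x y
  rw [← Int.self_sub_fract, ← Int.self_sub_fract y, abs_lt]
  constructor <;> linarith [Int.fract_nonneg x, Int.fract_lt_one x, Int.fract_nonneg y,
    Int.fract_lt_one y]

lemma isRounding_ceil : IsRounding Int.ceil := by
  intro x y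
  have h := isRounding_floor (-x) (-y)
  rw [Int.floor_neg, Int.floor_neg] at h
  rw [← abs_neg]
  convert h using 2
  push_cast
  ring

lemma IsRounding.abs_sub_lt {g : ℝ → ℤ} (hg : IsRounding g) (x y : ℝ) :
    |((g y - g x : ℤ) : ℝ) - (y - x)| < 1 := by
  convert hg y x using 2
  push_cast
  ring

def cuttingWord (g : ℝ → ℤ) (θ ρ : ℝ) : ℕ → ℤ :=
  fun n => g (((n : ℝ) + 1) * θ + ρ) - g ((n : ℝ) * θ + ρ)

section cuttingWord

variable {g : ℝ → ℤ} {θ : ℝ}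

lemma IsRounding.abs_windowSum_cuttingWord_sub_lt (hg : IsRounding g) (ρ : ℝ) (m L : ℕ) :
    |(windowSum (cuttingWord g θ ρ) m L : ℝ) - L * θ| < 1 := by
  set f : ℕ → ℤ := fun j => g (((m + 1 + j : ℕ) : ℝ) * θ + ρ)
  have htel : windowSum (cuttingWord g θ ρ) m L = f L - f 0 := by
    rw [← sum_range_sub]
    refine sum_congr rfl fun j _ => ?_
    simp only [cuttingWord, f]
    push_cast
    ring_nf
  rw [htel]
  convert hg.abs_sub_lt (((m + 1 : ℕ) : ℝ) * θ + ρ) (((m + 1 + L : ℕ) : ℝ) * θ + ρ) using 3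
  push_cast
  ring

lemma IsRounding.isBinary_cuttingWord (hg : IsRounding g) (hθ : θ ∈ Set.Ioo 0 1) (ρ : ℝ) :
    IsBinary (cuttingWord g θ ρ) := by
  intro n
  have h := hg.abs_sub_lt ((n : ℝ) * θ + ρ) (((n : ℝ) + 1) * θ + ρ)
  rw [abs_lt] at h
  have hlo : (-1 : ℝ) < cuttingWord g θ ρ n := by
    simp only [cuttingWord] at h ⊢; linarith [hθ.1]
  have hhi : (cuttingWord g θ ρ n : ℝ) < 2 := by
    simp only [cuttingWord] at h ⊢; linarith [hθ.2]
  have : -1 < cuttingWord g θ ρ n := by exact_mod_cast hlo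
  have : cuttingWord g θ ρ n < 2 := by exact_mod_cast hhi
  omega

end cuttingWord

section Sturmian

variable {θ : ℝ} {s : ℕ → ℤ}

lemma IsSturmian.exists_rounding (hs : IsSturmian θ s) :
    ∃ g ρ, IsRounding g ∧ EqW s (cuttingWord g θ ρ) := by
  obtain ⟨-, -, ρ, hf | hc⟩ := hs
  exacts [⟨_, ρ, isRounding_floor, hf⟩, ⟨_, ρ, isRounding_ceil, hc⟩]

lemma IsSturmian.abs_windowSum_sub_lt (hs : IsSturmian θ s) (m L : ℕ) :
    |(windowSum s m L : ℝ) - L * θ| < 1 := by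
  obtain ⟨g, ρ, hg, hs⟩ := hs.exists_rounding
  rw [windowSum_eq_of_eqW hs]
  exact hg.abs_windowSum_cuttingWord_sub_lt ρ m L

/-- Reading `s` as a cutting word extends it to the left, past the prepended block. -/
lemma IsSturmian.exists_cuttingWord_eq_prepend (hs : IsSturmian θ s) (a : ℤ) (p : ℕ) :
    ∃ g ρ, IsRounding g ∧ ∀ i, p < i → Prepend a p s i = cuttingWord g θ ρ i := by
  obtain ⟨g, ρ, hg, hs⟩ := hs.exists_rounding
  refine ⟨g, ρ - p * θ, hg, fun i hi => ?_⟩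
  rw [Prepend, if_neg (by omega), hs _ (by omega)]
  simp only [cuttingWord]
  push_cast [Nat.cast_sub hi.le]
  ring_nf

lemma IsSturmian.isBinary_prepend (hs : IsSturmian θ s) {a : ℤ} (ha : a = 0 ∨ a = 1) (p : ℕ) :
    IsBinary (Prepend a p s) := by
  obtain ⟨g, ρ, hg, hσ⟩ := hs.exists_cuttingWord_eq_prepend a p
  intro i
  by_cases hi : i ≤ p
  · rwa [Prepend, if_pos hi]
  · rw [hσ i (by omega)]
    exact hg.isBinary_cuttingWord hs.2.1 ρ i

end Sturmian

/-- The words `a^p s` of the class `S` (see `MemS`) whose Sturmian part has slope `θ`. -/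
def MemSWithSlope (θ : ℝ) (u : ℕ → ℤ) : Prop :=
  ∃ a p s, (a = 0 ∨ a = 1) ∧ IsSturmian θ s ∧ u = Prepend a p s

namespace MemSWithSlope

variable {θ : ℝ} {u : ℕ → ℤ}

lemma isBinary (hu : MemSWithSlope θ u) : IsBinary u := by
  obtain ⟨a, p, s, ha, hs, rfl⟩ := hu
  exact hs.isBinary_prepend ha p

/-- After a letter `1`, the prepended block consists of `1`s or is already over, so every window
is at least as heavy as the corresponding window of the extended cutting word. -/
lemma lt_windowSum (hu : MemSWithSlope θ u) {k : ℕ} (hk : u k = 1) (L : ℕ) :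
    L * θ - 1 < windowSum u k L := by
  obtain ⟨a, p, s, -, hs, rfl⟩ := hu
  obtain ⟨g, ρ, hg, hσ⟩ := hs.exists_cuttingWord_eq_prepend a p
  have hle : windowSum (cuttingWord g θ ρ) k L ≤ windowSum (Prepend a p s) k L := by
    refine windowSum_le_windowSum fun i hi => ?_
    by_cases hip : i ≤ p
    · rw [Prepend, if_pos (by omega)] at hk
      rw [Prepend, if_pos hip, hk]
      rcases hg.isBinary_cuttingWord hs.2.1 ρ i with h | h <;> omega
    · exact (hσ i (by omega)).ge
  have := (abs_lt.mp (hg.abs_windowSum_cuttingWord_sub_lt (θ := θ) ρ k L)).1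
  have : (windowSum (cuttingWord g θ ρ) k L : ℝ) ≤ windowSum (Prepend a p s) k L := by
    exact_mod_cast hle
  linarith

lemma windowSum_lt (hu : MemSWithSlope θ u) {k : ℕ} (hk : u k = 0) (L : ℕ) :
    windowSum u k L < L * θ + 1 := by
  obtain ⟨a, p, s, -, hs, rfl⟩ := hu
  obtain ⟨g, ρ, hg, hσ⟩ := hs.exists_cuttingWord_eq_prepend a p
  have hle : windowSum (Prepend a p s) k L ≤ windowSum (cuttingWord g θ ρ) k L := by
    refine windowSum_le_windowSum fun i hi => ?_
    by_cases hip : i ≤ p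
    · rw [Prepend, if_pos (by omega)] at hk
      rw [Prepend, if_pos hip, hk]
      rcases hg.isBinary_cuttingWord hs.2.1 ρ i with h | h <;> omega
    · exact (hσ i (by omega)).le
  have := (abs_lt.mp (hg.abs_windowSum_cuttingWord_sub_lt (θ := θ) ρ k L)).2
  have : (windowSum (Prepend a p s) k L : ℝ) ≤ windowSum (cuttingWord g θ ρ) k L := by
    exact_mod_cast hle
  linarith

lemma windowSum_le_windowSum_add_one {u' : ℕ → ℤ} (hu : MemSWithSlope θ u)
    (hu' : MemSWithSlope θ u') {k : ℕ} (hk : u' k < u k) (L : ℕ) :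
    windowSum u' k L ≤ windowSum u k L + 1 := by
  obtain ⟨h1, h0⟩ : u k = 1 ∧ u' k = 0 := by
    rcases hu.isBinary k with h | h <;> rcases hu'.isBinary k with h' | h' <;> omega
  have := hu.lt_windowSum h1 L
  have := hu'.windowSum_lt h0 L
  have : (windowSum u' k L : ℝ) < windowSum u k L + 2 := by linarith
  have : windowSum u' k L < windowSum u k L + 2 := by exact_mod_cast this
  omega

end MemSWithSlope

section slope

lemma sum_Icc_eq_windowSum (v : ℕ → ℤ) (n : ℕ) :
    ∑ i ∈ Icc 1 n, (v i : ℝ) = windowSum v 0 n := by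
  rw [windowSum, ← Ico_add_one_right_eq_Icc, sum_Ico_eq_sum_range]
  push_cast
  exact sum_congr rfl fun j _ => by rw [add_comm 1 j]

lemma hasSlope_of_abs_windowSum_sub_le {v : ℕ → ℤ} {θ : ℝ} (C : ℝ)
    (hC : ∀ n : ℕ, |(windowSum v 0 n : ℝ) - n * θ| ≤ C) : HasSlope v θ := by
  have hdiff : Filter.Tendsto (fun n : ℕ => (windowSum v 0 n : ℝ) / n - θ) Filter.atTop
      (nhds 0) := by
    refine squeeze_zero_norm' ?_ (tendsto_const_div_atTop_nhds_zero_nat C)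
    filter_upwards [Filter.eventually_gt_atTop 0] with n hn
    have hn : (0 : ℝ) < n := by exact_mod_cast hn
    rw [Real.norm_eq_abs, div_sub' hn.ne', abs_div, abs_of_pos hn]
    exact div_le_div_of_nonneg_right (hC n) hn.le
  simpa [HasSlope, sum_Icc_eq_windowSum] using hdiff.add_const θ

lemma HasSlope.eq_of_eqW {w v : ℕ → ℤ} {θ θ' : ℝ} (hw : HasSlope w θ) (hv : HasSlope v θ')
    (h : EqW w v) : θ = θ' := by
  refine tendsto_nhds_unique hw (hv.congr fun n => ?_)
  simp only [sum_Icc_eq_windowSum, windowSum_eq_of_eqW h]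

lemma windowSum_dbl (v : ℕ → ℤ) (J : ℕ) :
    windowSum (Dbl v) 0 J = windowSum v 0 ((J + 1) / 2) + windowSum v 0 (J / 2) := by
  induction J with
  | zero => rfl
  | succ J ih =>
    rw [windowSum_succ, ih]
    rcases Nat.even_or_odd' J with ⟨t, rfl | rfl⟩
    · rw [show (2 * t + 1 + 1) / 2 = t + 1 by omega, show (2 * t + 1) / 2 = t by omega,
        show 2 * t / 2 = t by omega, windowSum_succ]
      simp only [Dbl]
      rw [show (0 + 1 + 2 * t + 1) / 2 = 0 + 1 + t by omega]
      ring
    · rw [show (2 * t + 1 + 1 + 1) / 2 = t + 1 by omega, show (2 * t + 1 + 1) / 2 = t + 1 by omega,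
        show (2 * t + 1) / 2 = t by omega, windowSum_succ]
      simp only [Dbl]
      rw [show (0 + 1 + (2 * t + 1) + 1) / 2 = 0 + 1 + t by omega]
      ring

variable {v : ℕ → ℤ} {θ C : ℝ}

lemma abs_windowSum_dbl_sub_le (hC : ∀ n : ℕ, |(windowSum v 0 n : ℝ) - n * θ| ≤ C) (n : ℕ) :
    |(windowSum (Dbl v) 0 n : ℝ) - n * θ| ≤ 2 * C := by
  have hn : (((n + 1) / 2 : ℕ) : ℝ) + ((n / 2 : ℕ) : ℝ) = n := by exact_mod_cast (by omega)
  rw [windowSum_dbl, Int.cast_add, ← hn]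
  calc _ = |((windowSum v 0 ((n + 1) / 2) : ℝ) - ((n + 1) / 2 : ℕ) * θ)
          + ((windowSum v 0 (n / 2) : ℝ) - (n / 2 : ℕ) * θ)| := by ring_nf
    _ ≤ C + C := (abs_add_le _ _).trans (add_le_add (hC _) (hC _))
    _ = 2 * C := by ring

lemma abs_windowSum_prepend_sub_le {a : ℤ} (ha : |(a : ℝ) - θ| ≤ 1) (l : ℕ)
    (hC : ∀ n : ℕ, |(windowSum v 0 n : ℝ) - n * θ| ≤ C) (n : ℕ) :
    |(windowSum (Prepend a l v) 0 n : ℝ) - n * θ| ≤ C + l := by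
  have hconst : ∀ N ≤ l, windowSum (Prepend a l v) 0 N = N * a := fun N hN => by
    rw [windowSum, sum_congr rfl fun j hj => show Prepend a l v (0 + 1 + j) = a from
      if_pos (by simp only [mem_range] at hj; omega), sum_const, card_range, nsmul_eq_mul]
  have hC0 : 0 ≤ C := (abs_nonneg _).trans (hC 0)
  rcases le_or_gt n l with hnl | hln
  · rw [hconst n hnl, Int.cast_mul, Int.cast_natCast, ← mul_sub, abs_mul, Nat.abs_cast]
    have : (n : ℝ) ≤ l := by exact_mod_cast hnl
    nlinarith [abs_nonneg ((a : ℝ) - θ)]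
  · obtain ⟨d, rfl⟩ := Nat.exists_eq_add_of_lt hln
    have htail : windowSum (Prepend a l v) l (d + 1) = windowSum v 0 (d + 1) :=
      sum_congr rfl fun j _ => by rw [Prepend, if_neg (by omega)]; congr 1; omega
    rw [show l + d + 1 = l + (d + 1) by ring, windowSum_add, zero_add, hconst l le_rfl, htail]
    push_cast
    calc _ = |(l : ℝ) * (a - θ) + ((windowSum v 0 (d + 1) : ℝ) - ((d + 1 : ℕ) : ℝ) * θ)| := by
          push_cast; ring_nf
      _ ≤ l * 1 + C := by
          refine (abs_add_le _ _).trans (add_le_add ?_ (hC _))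
          rw [abs_mul, Nat.abs_cast]
          exact mul_le_mul_of_nonneg_left ha (Nat.cast_nonneg l)
      _ = C + l := by ring

lemma IsSturmian.hasSlope_prepend_dbl {s : ℕ → ℤ} (hs : IsSturmian θ s) {a : ℤ}
    (ha : a = 0 ∨ a = 1) (l : ℕ) : HasSlope (Prepend a l (Dbl s)) θ := by
  have haθ : |(a : ℝ) - θ| ≤ 1 := by
    rw [abs_le]
    rcases ha with rfl | rfl <;> constructor <;> norm_num <;> linarith [hs.2.1.1, hs.2.1.2]
  exact hasSlope_of_abs_windowSum_sub_le _ (abs_windowSum_prepend_sub_le haθ l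
    (abs_windowSum_dbl_sub_le fun n => (hs.abs_windowSum_sub_lt 0 n).le))

end slope

lemma prepend_two_mul_dbl (a : ℤ) (p : ℕ) (s : ℕ → ℤ) :
    Prepend a (2 * p) (Dbl s) = Dbl (Prepend a p s) := by
  funext n
  simp only [Prepend, Dbl]
  split_ifs <;> first | rfl | omega | (congr 1; omega)

lemma prepend_two_mul_add_one_dbl (a : ℤ) (p : ℕ) (s : ℕ → ℤ) :
    Prepend a (2 * p + 1) (Dbl s) = Prepend a 1 (Dbl (Prepend a p s)) := by
  funext n
  simp only [Prepend, Dbl]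
  split_ifs <;> first | rfl | omega | (congr 1; omega)

lemma MemD.exists_normalForm {w : ℕ → ℤ} {θ : ℝ} (hw : MemD w) (h : HasSlope w θ) :
    ∃ b u, (b = 0 ∨ b = 1) ∧ MemSWithSlope θ u ∧ (EqW w (Dbl u) ∨ EqW w (Prepend b 1 (Dbl u))) := by
  obtain ⟨a, l, s, θs, ha, hs, hws⟩ := hw
  obtain rfl := h.eq_of_eqW (hs.hasSlope_prepend_dbl ha l) hws
  refine ⟨a, Prepend a (l / 2) s, ha, ⟨a, l / 2, s, ha, hs, rfl⟩, ?_⟩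
  rcases Nat.even_or_odd' l with ⟨p, rfl | rfl⟩
  · left
    rwa [← prepend_two_mul_dbl, show 2 * p / 2 = p by omega]
  · right
    rwa [← prepend_two_mul_add_one_dbl, show (2 * p + 1) / 2 = p by omega]

def complWord (v : ℕ → ℤ) : ℕ → ℤ := fun n => 1 - v n

namespace IsBinary

variable {v : ℕ → ℤ}

lemma abs_le_one (hv : IsBinary v) (i : ℕ) : |(v i : ℝ)| ≤ 1 := by
  rcases hv i with h | h <;> simp [h]

lemma dbl (hv : IsBinary v) : IsBinary (Dbl v) := fun _ => hv _

lemma prepend (hv : IsBinary v) {b : ℤ} (hb : b = 0 ∨ b = 1) (l : ℕ) :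
    IsBinary (Prepend b l v) := fun i => by
  simp only [Prepend]; split_ifs; exacts [hb, hv _]

lemma complWord (hv : IsBinary v) : IsBinary (complWord v) := fun i => by
  simp only [_root_.complWord]; rcases hv i with h | h <;> simp [h]

end IsBinary

lemma complWord_prepend (b : ℤ) (l : ℕ) (v : ℕ → ℤ) :
    complWord (Prepend b l v) = Prepend (1 - b) l (complWord v) := by
  funext n
  simp only [complWord, Prepend]
  split_ifs <;> rfl

lemma complWord_dbl (v : ℕ → ℤ) : complWord (Dbl v) = Dbl (complWord v) := rfl

section tval

variable {v : ℕ → ℤ} {x : ℝ}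

lemma IsBinary.summable_tval (hv : IsBinary v) (hx : |x| < 1) :
    Summable fun i : ℕ => (v (i + 1) : ℝ) * x ^ (i + 1) := by
  refine Summable.of_norm_bounded ((summable_nat_add_iff 1).mpr
    (summable_geometric_of_lt_one (abs_nonneg x) hx)) fun i => ?_
  rw [Real.norm_eq_abs, abs_mul, abs_pow]
  exact mul_le_of_le_one_left (by positivity) (hv.abs_le_one _)

lemma tval_congr {v' : ℕ → ℤ} (h : EqW v v') : tval x v = tval x v' :=
  tsum_congr fun i => by rw [h (i + 1) (by omega)]

lemma tval_sub {v' : ℕ → ℤ} (hv : IsBinary v) (hv' : IsBinary v') (hx : |x| < 1) :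
    tval x (v - v') = tval x v - tval x v' := by
  rw [tval, tval, tval, ← (hv.summable_tval hx).tsum_sub (hv'.summable_tval hx)]
  exact tsum_congr fun i => by push_cast [Pi.sub_apply]; ring

lemma tval_prepend_one (hv : IsBinary v) (hx : |x| < 1) (b : ℤ) :
    tval x (Prepend b 1 v) = b * x + x * tval x v := by
  have htail : ∀ i : ℕ, (Prepend b 1 v (i + 1 + 1) : ℝ) * x ^ (i + 1 + 1)
      = x * ((v (i + 1) : ℝ) * x ^ (i + 1)) := fun i => by
    rw [Prepend, if_neg (by omega), Nat.add_sub_cancel, pow_succ]; ring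
  rw [tval, tsum_eq_zero_add' ?_, tsum_congr htail, tsum_mul_left, tval, Prepend, if_pos le_rfl,
    zero_add, pow_one]
  exact ((hv.summable_tval hx).mul_left x).congr fun i => (htail i).symm

/-- Pairing the letters of `Dbl v` turns the alternating series in `-r` into a series in `r²`. -/
lemma tval_dbl (hv : IsBinary v) {r : ℝ} (hr : |r| < 1) :
    r * tval (-r) (Dbl v) = (r - 1) * tval (r ^ 2) v := by
  have hr' : |-r| < 1 := by rwa [abs_neg]
  have hsum := hv.dbl.summable_tval hr'
  have hinj : ∀ c : ℕ, Function.Injective fun k : ℕ => 2 * k + c := fun c a b h => by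
    simp only at h; omega
  have hodd : ∀ k : ℕ, (Dbl v (2 * k + 1) : ℝ) * (-r) ^ (2 * k + 1)
      = -((v (k + 1) : ℝ) * r ^ (2 * k + 1)) := fun k => by
    rw [Dbl, show (2 * k + 1 + 1) / 2 = k + 1 by omega, Odd.neg_pow ⟨k, rfl⟩]; ring
  have heven : ∀ k : ℕ, (Dbl v (2 * k + 1 + 1) : ℝ) * (-r) ^ (2 * k + 1 + 1)
      = r * ((v (k + 1) : ℝ) * r ^ (2 * k + 1)) := fun k => by
    rw [Dbl, show (2 * k + 1 + 1 + 1) / 2 = k + 1 by omega, Even.neg_pow ⟨k + 1, by ring⟩]; ring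
  have hsq : ∀ k : ℕ, (v (k + 1) : ℝ) * (r ^ 2) ^ (k + 1)
      = r * ((v (k + 1) : ℝ) * r ^ (2 * k + 1)) := fun k => by ring
  rw [tval, ← tsum_even_add_odd (f := fun i : ℕ => (Dbl v (i + 1) : ℝ) * (-r) ^ (i + 1))
    (hsum.comp_injective (hinj 0)) (hsum.comp_injective (hinj 1)),
    tsum_congr hodd, tsum_congr heven, tval, tsum_congr hsq, tsum_neg, tsum_mul_left]
  ring

lemma tval_complWord (hv : IsBinary v) (hx : |x| < 1) :
    tval x (complWord v) = x / (1 - x) - tval x v := by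
  have hgeom : ∑' i : ℕ, x ^ (i + 1) = x / (1 - x) := by
    simp only [pow_succ, tsum_mul_right, tsum_geometric_of_abs_lt_one hx, div_eq_inv_mul]
  rw [← hgeom, tval, tval, ← ((summable_nat_add_iff 1).mpr
    (summable_geometric_of_abs_lt_one hx)).tsum_sub (hv.summable_tval hx)]
  exact tsum_congr fun i => by simp only [complWord]; push_cast; ring

lemma IsBinary.tval_nonneg (hv : IsBinary v) (hx : 0 ≤ x) : 0 ≤ tval x v :=
  tsum_nonneg fun i => mul_nonneg (by rcases hv (i + 1) with h | h <;> simp [h]) (by positivity)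

lemma IsBinary.tval_pos (hv : IsBinary v) (hx0 : 0 < x) (hx1 : x < 1) {k : ℕ} (hk : 1 ≤ k)
    (hvk : v k = 1) : 0 < tval x v := by
  have hx : |x| < 1 := by rwa [abs_of_pos hx0]
  refine (hv.summable_tval hx).tsum_pos
    (fun i => mul_nonneg (by rcases hv (i + 1) with h | h <;> simp [h]) (by positivity)) (k - 1) ?_
  rw [Nat.sub_add_cancel hk, hvk]
  simp [hx0]

end tval

lemma abs_windowSum_le {c : ℕ → ℤ} (hc : ∀ i, |c i| ≤ 1) (m L : ℕ) : |windowSum c m L| ≤ L :=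
  (abs_sum_le_sum_abs _ _).trans <| by
    simpa using sum_le_sum fun j (_ : j ∈ range L) => hc (m + 1 + j)

/-- Abel summation: `∑ c_i ρ^i = (1 - ρ) ∑ T_N ρ^N` for the partial sums `T_N` of `c`. -/
lemma tval_pos_of_windowSum_nonneg {c : ℕ → ℤ} (hc : ∀ i, |c i| ≤ 1) {ρ : ℝ} (hρ0 : 0 < ρ)
    (hρ1 : ρ < 1) (hT : ∀ N, 0 ≤ windowSum c 0 N) {k : ℕ} (hk : 0 < windowSum c 0 k) :
    0 < tval ρ c := by
  set T : ℕ → ℝ := fun N => windowSum c 0 N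
  have hsum : Summable fun N => T N * ρ ^ N := by
    refine Summable.of_norm_bounded (summable_pow_mul_geometric_of_norm_lt_one 1
      (by rwa [Real.norm_of_nonneg hρ0.le])) fun N => ?_
    rw [Real.norm_eq_abs, abs_mul, abs_of_pos (pow_pos hρ0 N), pow_one]
    have : |T N| ≤ N := by simp only [T]; exact_mod_cast abs_windowSum_le hc 0 N
    exact mul_le_mul_of_nonneg_right this (by positivity)
  have hstep : ∀ N : ℕ,
      (c (N + 1) : ℝ) * ρ ^ (N + 1) = T (N + 1) * ρ ^ (N + 1) - ρ * (T N * ρ ^ N) :=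
    fun N => by simp only [T, windowSum_succ, zero_add, add_comm 1 N]; push_cast; ring
  have habel : tval ρ c = (1 - ρ) * ∑' N, T N * ρ ^ N := by
    rw [tval, tsum_congr hstep, ((summable_nat_add_iff 1).mpr hsum).tsum_sub (hsum.mul_left ρ),
      tsum_mul_left, hsum.tsum_eq_zero_add]
    simp only [T, windowSum_zero, Int.cast_zero, zero_mul, zero_add]
    ring
  rw [habel]
  have hTpos : 0 < T k := by simp only [T]; exact_mod_cast hk
  have hTnn : ∀ N, 0 ≤ T N := fun N => by simp only [T]; exact_mod_cast hT N
  exact mul_pos (by linarith) (hsum.tsum_pos (fun N => mul_nonneg (hTnn N) (by positivity)) k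
    (mul_pos hTpos (pow_pos hρ0 k)))

/-- The partial sums of `u - u'` never become negative, so Abel summation applies. -/
lemma tval_lt_tval_of_lexLt {u u' : ℕ → ℤ} (hu : IsBinary u) (hu' : IsBinary u') {ρ : ℝ}
    (hρ0 : 0 < ρ) (hρ1 : ρ < 1)
    (hbal : ∀ k L, u' k < u k → windowSum u' k L ≤ windowSum u k L + 1) (hlex : LexLt u' u) :
    tval ρ u' < tval ρ u := by
  obtain ⟨k, hk1, hagree, hlt⟩ := hlex
  have hρ : |ρ| < 1 := by rwa [abs_of_pos hρ0]
  have hT : ∀ N, windowSum (u - u') 0 N = windowSum u 0 N - windowSum u' 0 N := fun N =>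
    sum_sub_distrib _ _
  have hpre : windowSum u' 0 (k - 1) = windowSum u 0 (k - 1) :=
    windowSum_congr fun i hi hik => hagree i hi (by omega)
  have hTk : 1 ≤ windowSum (u - u') 0 k := by
    rw [hT, show k = k - 1 + 1 by omega, windowSum_succ, windowSum_succ, hpre,
      show 0 + 1 + (k - 1) = k by omega]
    omega
  have hsub := tval_pos_of_windowSum_nonneg (c := u - u') (fun i => by
      rcases hu i with h | h <;> rcases hu' i with h' | h' <;> simp [h, h']) hρ0 hρ1
    (fun N => ?_) (k := k) (by omega)
  · rw [tval_sub hu hu' hρ] at hsub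
    linarith
  rcases lt_or_ge N k with hNk | hkN
  · rw [hT, windowSum_congr fun i hi hiN => hagree i hi (by omega)]
    omega
  · obtain ⟨L, rfl⟩ := Nat.exists_eq_add_of_le hkN
    have := hbal k L hlt
    rw [hT, windowSum_add, windowSum_add, zero_add]
    rw [hT] at hTk
    omega

section altOrder

variable {u u' v v' : ℕ → ℤ}

lemma AltLt.of_eqW {w w' : ℕ → ℤ} (hlt : AltLt v v') (h : EqW v w) (h' : EqW v' w') :
    AltLt w w' := by
  obtain ⟨n, hn, hagree, hsign⟩ := hlt
  refine ⟨n, hn, fun i hi hin => ?_, ?_⟩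
  · rw [← h i hi, ← h' i hi, hagree i hi hin]
  · rwa [← h n hn, ← h' n hn]

lemma altLt_complWord (h : AltLt v v') : AltLt (complWord v') (complWord v) := by
  obtain ⟨n, hn, hagree, hsign⟩ := h
  refine ⟨n, hn, fun i hi hin => by simp only [complWord, hagree i hi hin], ?_⟩
  simpa only [complWord, sub_sub_sub_cancel_left] using hsign

lemma lexLt_of_altLt_dbl (h : AltLt (Dbl u) (Dbl u')) : LexLt u' u := by
  obtain ⟨n, hn, hagree, hsign⟩ := h
  simp only [Dbl] at hagree hsign
  rcases Nat.even_or_odd' n with ⟨t, rfl | rfl⟩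
  · have := hagree (2 * t - 1) (by omega) (by omega)
    rw [show (2 * t - 1 + 1) / 2 = (2 * t + 1) / 2 by omega] at this
    rw [this, sub_self, mul_zero] at hsign
    exact absurd hsign zero_ne_one
  · refine ⟨t + 1, by omega, fun i hi hit => ?_, ?_⟩
    · have := hagree (2 * i - 1) (by omega) (by omega)
      rwa [show (2 * i - 1 + 1) / 2 = i by omega, eq_comm] at this
    · rw [Odd.neg_one_pow ⟨t, rfl⟩, show (2 * t + 1 + 1) / 2 = t + 1 by omega] at hsign
      linarith

lemma altLt_of_altLt_prepend_one {b : ℤ} (h : AltLt (Prepend b 1 v) (Prepend b 1 v')) :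
    AltLt v' v := by
  obtain ⟨n, hn, hagree, hsign⟩ := h
  have htail : ∀ {w : ℕ → ℤ} (i : ℕ), Prepend b 1 w (i + 1 + 1) = w (i + 1) := fun i =>
    if_neg (by omega)
  obtain ⟨n, rfl⟩ : ∃ m, n = m + 1 + 1 := by
    refine ⟨n - 2, by_contra fun hne => ?_⟩
    rw [show n = 1 by omega, Prepend, Prepend, if_pos le_rfl, if_pos le_rfl, sub_self,
      mul_zero] at hsign
    exact zero_ne_one hsign
  refine ⟨n + 1, by omega, fun i hi hin => ?_, ?_⟩
  · have := hagree (i + 1) (by omega) (by omega)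
    rw [show i + 1 = i - 1 + 1 + 1 by omega, htail, htail, show i - 1 + 1 = i by omega] at this
    exact this.symm
  · rw [htail, htail, pow_succ] at hsign
    linarith

lemma eq_add_one_of_altLt_prepend_one {b b' : ℤ} (h : AltLt (Prepend b 1 v) (Prepend b' 1 v'))
    (hne : b ≠ b') : b = b' + 1 := by
  obtain ⟨n, hn, hagree, hsign⟩ := h
  obtain rfl : n = 1 := by
    by_contra hn1
    have := hagree 1 le_rfl (by omega)
    rw [Prepend, Prepend, if_pos le_rfl, if_pos le_rfl] at this
    exact hne this
  rw [Prepend, Prepend, if_pos le_rfl, if_pos le_rfl] at hsign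
  linarith

lemma dbl_two_mul_add_two (u : ℕ → ℤ) (t : ℕ) : Dbl u (2 * t + 2) = Dbl u (2 * t + 1) := by
  simp only [Dbl]; congr 1; omega

lemma prepend_one_dbl_two_mul_add_three (b : ℤ) (u : ℕ → ℤ) (t : ℕ) :
    Prepend b 1 (Dbl u) (2 * t + 3) = Prepend b 1 (Dbl u) (2 * t + 2) := by
  simp only [Prepend, Dbl, if_neg (show ¬2 * t + 3 ≤ 1 by omega),
    if_neg (show ¬2 * t + 2 ≤ 1 by omega)]
  congr 1; omega

/-- Along the common prefix the pairs of `Dbl u` and of `b (Dbl u')` interlock, so that the whole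
prefix is the letter `b`; the first difference must then raise a letter above `b`. -/
lemma exists_eq_add_one_of_altLt_dbl_prepend_one {b : ℤ}
    (h : AltLt (Dbl u) (Prepend b 1 (Dbl u'))) : ∃ k, 1 ≤ k ∧ (u k = b + 1 ∨ u' k = b + 1) := by
  obtain ⟨n, hn, hagree, hsign⟩ := h
  have hy1 : Prepend b 1 (Dbl u') 1 = b := if_pos le_rfl
  have hprefix : ∀ i, 1 ≤ i → i < n → Dbl u i = b := by
    intro i hi
    induction i, hi using Nat.le_induction with
    | base => exact fun h1n => (hagree 1 le_rfl h1n).trans hy1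
    | succ i hi ih =>
      intro hin
      rcases Nat.even_or_odd' i with ⟨t, rfl | rfl⟩
      · obtain ⟨t, rfl⟩ : ∃ s, t = s + 1 := ⟨t - 1, by omega⟩
        rw [hagree _ (by omega) hin, show 2 * (t + 1) + 1 = 2 * t + 3 by ring,
          prepend_one_dbl_two_mul_add_three, show 2 * t + 2 = 2 * (t + 1) by ring,
          ← hagree _ (by omega) (by omega), ih (by omega)]
      · rw [dbl_two_mul_add_two, ih (by omega)]
  rcases Nat.even_or_odd' n with ⟨t, rfl | rfl⟩
  · obtain ⟨t, rfl⟩ : ∃ s, t = s + 1 := ⟨t - 1, by omega⟩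
    rw [show 2 * (t + 1) = 2 * t + 2 by ring, dbl_two_mul_add_two, hprefix _ (by omega) (by omega),
      Even.neg_one_pow ⟨t + 1, by ring⟩, one_mul] at hsign
    refine ⟨t + 1, by omega, Or.inr ?_⟩
    simp only [Prepend, Dbl, if_neg (show ¬2 * t + 2 ≤ 1 by omega),
      show (2 * t + 2 - 1 + 1) / 2 = t + 1 by omega] at hsign
    linarith
  · have hyn : Prepend b 1 (Dbl u') (2 * t + 1) = b := by
      rcases t with _ | t
      · exact hy1
      · rw [show 2 * (t + 1) + 1 = 2 * t + 3 by ring, prepend_one_dbl_two_mul_add_three,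
          ← hagree _ (by omega) (by omega), hprefix _ (by omega) (by omega)]
    rw [hyn, Odd.neg_one_pow ⟨t, rfl⟩] at hsign
    refine ⟨t + 1, by omega, Or.inl ?_⟩
    simp only [Dbl, show (2 * t + 1 + 1) / 2 = t + 1 by omega] at hsign
    linarith

end altOrder

section doubledWords

variable {r : ℝ} {u u' : ℕ → ℤ}

lemma IsBinary.tval_dbl_nonpos (hu : IsBinary u) (h0 : 0 < r) (h1 : r < 1) :
    tval (-r) (Dbl u) ≤ 0 := by
  have := tval_dbl hu (abs_lt.mpr ⟨by linarith, by linarith⟩)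
  have := hu.tval_nonneg (x := r ^ 2) (by positivity)
  nlinarith

lemma IsBinary.tval_dbl_neg (hu : IsBinary u) (h0 : 0 < r) (h1 : r < 1) {k : ℕ} (hk : 1 ≤ k)
    (huk : u k = 1) : tval (-r) (Dbl u) < 0 := by
  have := tval_dbl hu (abs_lt.mpr ⟨by linarith, by linarith⟩)
  have := hu.tval_pos (x := r ^ 2) (by positivity) (by nlinarith) hk huk
  nlinarith

lemma IsBinary.neg_div_le_tval_dbl (hu : IsBinary u) (h0 : 0 < r) (h1 : r < 1) :
    -r / (1 + r) ≤ tval (-r) (Dbl u) := by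
  have h := tval_complWord hu.dbl (x := -r) (abs_lt.mpr ⟨by linarith, by linarith⟩)
  rw [complWord_dbl, sub_neg_eq_add] at h
  linarith [hu.complWord.tval_dbl_nonpos h0 h1]

lemma tval_dbl_lt_tval_dbl {θ : ℝ} (h0 : 0 < r) (h1 : r < 1) (hu : MemSWithSlope θ u)
    (hu' : MemSWithSlope θ u') (h : AltLt (Dbl u) (Dbl u')) :
    tval (-r) (Dbl u) < tval (-r) (Dbl u') := by
  have hr : |r| < 1 := abs_lt.mpr ⟨by linarith, h1⟩
  have hlex := tval_lt_tval_of_lexLt hu.isBinary hu'.isBinary (ρ := r ^ 2) (by positivity)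
    (by nlinarith) (fun k L hk => hu.windowSum_le_windowSum_add_one hu' hk L)
    (lexLt_of_altLt_dbl h)
  have := tval_dbl hu.isBinary hr
  have := tval_dbl hu'.isBinary hr
  refine lt_of_mul_lt_mul_left ?_ h0.le
  nlinarith

lemma tval_prepend_dbl_lt_tval_prepend_dbl {θ : ℝ} (h0 : 0 < r) (h1 : r < 1)
    (hu : MemSWithSlope θ u) (hu' : MemSWithSlope θ u') {b b' : ℤ} (hb : b = 0 ∨ b = 1) (hb' : b' = 0 ∨ b' = 1)
    (h : AltLt (Prepend b 1 (Dbl u)) (Prepend b' 1 (Dbl u'))) :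
    tval (-r) (Prepend b 1 (Dbl u)) < tval (-r) (Prepend b' 1 (Dbl u')) := by
  have hr : |-r| < 1 := by rw [abs_neg]; exact abs_lt.mpr ⟨by linarith, h1⟩
  rw [tval_prepend_one hu.isBinary.dbl hr, tval_prepend_one hu'.isBinary.dbl hr]
  by_cases hbb : b = b'
  · subst hbb
    have := tval_dbl_lt_tval_dbl h0 h1 hu' hu (altLt_of_altLt_prepend_one h)
    nlinarith
  · obtain ⟨rfl, rfl⟩ : b = 1 ∧ b' = 0 := by
      have := eq_add_one_of_altLt_prepend_one h hbb
      omega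
    have hlow := hu.isBinary.neg_div_le_tval_dbl h0 h1
    have := hu'.isBinary.tval_dbl_nonpos h0 h1
    have hq : 1 + -r / (1 + r) = 1 / (1 + r) := by field_simp; ring
    have : 0 < 1 + -r / (1 + r) := by rw [hq]; positivity
    push_cast
    nlinarith [mul_le_mul_of_nonneg_left hlow h0.le]

lemma tval_dbl_lt_tval_prepend_dbl (h0 : 0 < r) (h1 : r < 1) (hu : IsBinary u)
    (hu' : IsBinary u') {b : ℤ} (hb : b = 0 ∨ b = 1) (h : AltLt (Dbl u) (Prepend b 1 (Dbl u'))) :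
    tval (-r) (Dbl u) < tval (-r) (Prepend b 1 (Dbl u')) := by
  obtain ⟨k, hk, hk'⟩ := exists_eq_add_one_of_altLt_dbl_prepend_one h
  obtain rfl : b = 0 := by
    rcases hk' with h | h
    · rcases hu k with h' | h' <;> omega
    · rcases hu' k with h' | h' <;> omega
  rw [tval_prepend_one hu'.dbl (by rw [abs_neg]; exact abs_lt.mpr ⟨by linarith, h1⟩)]
  push_cast
  rcases hk' with h | h
  · have := hu.tval_dbl_neg h0 h1 hk h
    nlinarith [hu'.tval_dbl_nonpos h0 h1]
  · have := hu'.tval_dbl_neg h0 h1 hk h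
    nlinarith [hu.tval_dbl_nonpos h0 h1]

/-- The complement reverses both the alternate order and `tval (-r)`, and turns `b (D u)` into
`(1 - b) D (1 - u)`. -/
lemma tval_prepend_dbl_lt_tval_dbl (h0 : 0 < r) (h1 : r < 1) (hu : IsBinary u)
    (hu' : IsBinary u') {b : ℤ} (hb : b = 0 ∨ b = 1) (h : AltLt (Prepend b 1 (Dbl u)) (Dbl u')) :
    tval (-r) (Prepend b 1 (Dbl u)) < tval (-r) (Dbl u') := by
  have hr : |-r| < 1 := by rw [abs_neg]; exact abs_lt.mpr ⟨by linarith, h1⟩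
  have hc := altLt_complWord h
  rw [complWord_dbl, complWord_prepend, complWord_dbl] at hc
  have := tval_dbl_lt_tval_prepend_dbl h0 h1 hu'.complWord hu.complWord (by omega) hc
  rw [← complWord_dbl, ← complWord_dbl, ← complWord_prepend, tval_complWord hu'.dbl hr,
    tval_complWord (hu.dbl.prepend hb 1) hr] at this
  linarith

end doubledWords

theorem stmt17 (r θ : ℝ) (h0 : 0 < r) (h1 : r < 1) (w w' : ℕ → ℤ)
    (hw : MemD w) (hw' : MemD w') (h : HasSlope w θ) (h' : HasSlope w' θ)
    (hlt : AltLt w w') : tval (-r) w < tval (-r) w' := by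
  obtain ⟨b, u, hb, hu, hwu | hwu⟩ := hw.exists_normalForm h <;>
  obtain ⟨b', u', hb', hu', hwu' | hwu'⟩ := hw'.exists_normalForm h' <;>
  rw [tval_congr hwu, tval_congr hwu'] <;>
  have hlt := hlt.of_eqW hwu hwu'
  · exact tval_dbl_lt_tval_dbl h0 h1 hu hu' hlt
  · exact tval_dbl_lt_tval_prepend_dbl h0 h1 hu.isBinary hu'.isBinary hb' hlt
  · exact tval_prepend_dbl_lt_tval_dbl h0 h1 hu.isBinary hu'.isBinary hb hlt
  · exact tval_prepend_dbl_lt_tval_prepend_dbl h0 h1 hu hu' hb hb' hlt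
end

section
/- An aperiodic binary sequence w is Sturmian if and only if there exists an infinite binary sequence u such that 0u ≼_lex T^n w ≼_lex 1u for all n ≥ 0, where T is the shift. Moreover, in that case u must equal the characteristic Sturmian word c_θ of the slope θ of w, and 0c_θ = inf_lex{T^n w : n ≥ 0}, 1c_θ = sup_lex{T^n w : n ≥ 0}. -/
/-!
For a Sturmian word of slope `θ`, every factor of length `n` has weight `⌊nθ⌋` or `⌈nθ⌉`, and
these are exactly the prefix weights of `0c_θ` and `1c_θ`; comparing prefix weights gives
`0c_θ ≤ Tⁿw ≤ 1c_θ`. The orbit of the irrational rotation is dense, so every prefix of `0c_θ` and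
of `1c_θ` is a prefix of some `Tⁿw`: the two bounds are the infimum and the supremum of the orbit,
and any `u` with `0u ≤ Tⁿw ≤ 1u` is squeezed to `c_θ`.

Conversely, a binary word that is not balanced has factors `1x1` and `0x0`, and the bounds then
give `x1… ≤ u ≤ x0…`, which is absurd. A balanced word has a slope `θ` with every factor of
length `n` of weight within `1` of `nθ`; aperiodicity makes `θ` irrational, hence these bounds
strict, and the supremum `ρ` of the prefix discrepancies puts `w` in floor or ceiling form.
-/

open Finset

def AgreeUpTo (s t : ℕ → ℤ) (m : ℕ) : Prop := ∀ i, 1 ≤ i → i ≤ m → s i = t i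

def blockSum (w : ℕ → ℤ) (k n : ℕ) : ℤ := ∑ i ∈ range n, w (k + i + 1)

section BlockSum

variable (w : ℕ → ℤ) (k n : ℕ)

lemma blockSum_zero : blockSum w k 0 = 0 := sum_range_zero _

lemma blockSum_succ : blockSum w k (n + 1) = blockSum w k n + w (k + n + 1) :=
  sum_range_succ _ _

lemma blockSum_one : blockSum w k 1 = w (k + 1) := by simp [blockSum]

lemma blockSum_add (m : ℕ) : blockSum w k (m + n) = blockSum w k m + blockSum w (k + m) n := by
  simp only [blockSum, sum_range_add, add_assoc]

lemma blockSum_succ_left :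
    blockSum w (k + 1) n + w (k + 1) = blockSum w k n + w (k + n + 1) := by
  rw [← blockSum_one w k, ← blockSum_succ, add_comm, ← blockSum_add, add_comm]

lemma blockSum_mul (m : ℕ) :
    blockSum w k (n * m) = ∑ i ∈ range n, blockSum w (k + i * m) m := by
  induction n with
  | zero => simp [blockSum_zero]
  | succ n ih => rw [Nat.succ_mul, blockSum_add, ih, sum_range_succ]

lemma shf_iterate_apply (i : ℕ) : Shf^[k] w i = w (i + k) := by
  induction k generalizing w with
  | zero => rfl
  | succ k ih => rw [Function.iterate_succ_apply, ih]; rfl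

lemma blockSum_shf_iterate : blockSum (Shf^[k] w) 0 n = blockSum w k n := by
  simp only [blockSum, shf_iterate_apply]
  exact sum_congr rfl fun i _ => congrArg w (by omega)

variable {w} in
lemma blockSum_congr {w' : ℕ → ℤ} (h : EqW w w') : blockSum w k n = blockSum w' k n :=
  sum_congr rfl fun _ _ => h _ (by omega)

end BlockSum

section LexOrder

variable {s t : ℕ → ℤ}

lemma lexLt_iff_toLex_lt : LexLt s t ↔ toLex (Shf s) < toLex (Shf t) := by
  constructor
  · rintro ⟨n, hn, hagree, hlt⟩
    obtain ⟨i, rfl⟩ : ∃ i, n = i + 1 := ⟨n - 1, by omega⟩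
    exact ⟨i, fun j hj => hagree (j + 1) (by omega) (by omega), hlt⟩
  · rintro ⟨i, hagree, hlt⟩
    refine ⟨i + 1, by omega, fun j hj hji => ?_, hlt⟩
    obtain ⟨j, rfl⟩ : ∃ j', j = j' + 1 := ⟨j - 1, by omega⟩
    exact hagree j (by omega)

lemma eqW_iff_shf_eq : EqW s t ↔ Shf s = Shf t := by
  refine ⟨fun h => funext fun i => h (i + 1) (by omega), fun h i hi => ?_⟩
  obtain ⟨j, rfl⟩ : ∃ j, i = j + 1 := ⟨i - 1, by omega⟩
  exact congrFun h j

lemma lexLe_iff_toLex_le : LexLe s t ↔ toLex (Shf s) ≤ toLex (Shf t) := by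
  rw [LexLe, lexLt_iff_toLex_lt, eqW_iff_shf_eq, le_iff_lt_or_eq, toLex_inj]
  exact Iff.rfl

lemma LexLe.trans {u : ℕ → ℤ} (h₁ : LexLe s t) (h₂ : LexLe t u) : LexLe s u := by
  rw [lexLe_iff_toLex_le] at *
  exact h₁.trans h₂

lemma LexLt.not_lexLe (h : LexLt s t) : ¬ LexLe t s := by
  rw [lexLt_iff_toLex_lt] at h
  rw [lexLe_iff_toLex_le]
  exact h.not_ge

lemma lexLt_of_not_lexLe (h : ¬ LexLe s t) : LexLt t s := by
  rw [lexLe_iff_toLex_le, not_le] at h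
  rwa [lexLt_iff_toLex_lt]

lemma EqW.of_lexLe_of_lexLe (h₁ : LexLe s t) (h₂ : LexLe t s) : EqW s t := by
  rw [lexLe_iff_toLex_le] at h₁ h₂
  rw [eqW_iff_shf_eq, ← toLex_inj]
  exact le_antisymm h₁ h₂

lemma LexLe.congr {s' t' : ℕ → ℤ} (hs : EqW s s') (ht : EqW t t') (h : LexLe s t) :
    LexLe s' t' := by
  rw [lexLe_iff_toLex_le] at *
  rwa [eqW_iff_shf_eq.1 hs, eqW_iff_shf_eq.1 ht] at h

lemma LexLe.shf (h₁ : s 1 = t 1) (h : LexLe s t) : LexLe (Shf s) (Shf t) := by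
  rcases h with ⟨n, hn, hagree, hlt⟩ | heq
  · obtain ⟨m, rfl⟩ : ∃ m, n = m + 2 := ⟨n - 2, by
      have : n ≠ 1 := by rintro rfl; exact hlt.ne h₁
      omega⟩
    exact Or.inl ⟨m + 1, by omega, fun i hi hin => hagree (i + 1) (by omega) (by omega), hlt⟩
  · exact Or.inr fun i _ => heq (i + 1) (by omega)

lemma eqW_shf_prepend (a : ℤ) (u : ℕ → ℤ) : EqW (Shf (Prepend a 1 u)) u := fun i hi => by
  rw [Shf, Prepend, if_neg (by omega), Nat.add_sub_cancel]

lemma LexLe.shf_le_of_le_prepend {a : ℤ} {u : ℕ → ℤ} (h : LexLe s (Prepend a 1 u))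
    (hs : s 1 = a) :
    LexLe (Shf s) u :=
  (h.shf hs).congr (fun _ _ => rfl) (eqW_shf_prepend a u)

lemma LexLe.le_shf_of_prepend_le {a : ℤ} {u : ℕ → ℤ} (h : LexLe (Prepend a 1 u) s)
    (hs : s 1 = a) :
    LexLe u (Shf s) :=
  (h.shf hs.symm).congr (eqW_shf_prepend a u) (fun _ _ => rfl)

lemma LexLe.of_prepend_le_prepend {a : ℤ} (h : LexLe (Prepend a 1 s) (Prepend a 1 t)) :
    LexLe s t :=
  (h.le_shf_of_prepend_le rfl).congr (fun _ _ => rfl) (eqW_shf_prepend a t)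

lemma lexLe_of_blockSum_le (h : ∀ n, blockSum s 0 n ≤ blockSum t 0 n) : LexLe s t := by
  by_contra hst
  obtain ⟨n, hn, hagree, hlt⟩ := lexLt_of_not_lexLe hst
  obtain ⟨m, rfl⟩ : ∃ m, n = m + 1 := ⟨n - 1, by omega⟩
  have hprefix : blockSum t 0 m = blockSum s 0 m :=
    sum_congr rfl fun i hi => hagree _ (by omega) (by rw [mem_range] at hi; omega)
  have := h (m + 1)
  rw [blockSum_succ, blockSum_succ, hprefix, zero_add] at this
  omega

lemma agreeUpTo_of_blockSum_eq {m : ℕ} (h : ∀ j ≤ m, blockSum s 0 j = blockSum t 0 j) :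
    AgreeUpTo s t m := by
  intro i hi him
  obtain ⟨j, rfl⟩ : ∃ j, i = j + 1 := ⟨i - 1, by omega⟩
  have := h (j + 1) him
  rw [blockSum_succ, blockSum_succ, h j (by omega), zero_add] at this
  omega

lemma lexLe_of_forall_lexLe_of_agreeUpTo {ι : Type*} {v x : ℕ → ℤ} {y : ι → ℕ → ℤ}
    (hx : ∀ m, ∃ k, AgreeUpTo (y k) x m) (hv : ∀ k, LexLe v (y k)) : LexLe v x := by
  by_contra h
  obtain ⟨n, hn, hagree, hlt⟩ := lexLt_of_not_lexLe h
  obtain ⟨k, hk⟩ := hx n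
  refine LexLt.not_lexLe ⟨n, hn, fun i hi hin => ?_, ?_⟩ (hv k)
  · rw [hk i hi hin.le]
    exact hagree i hi hin
  · rwa [hk n hn le_rfl]

lemma lexLe_of_forall_lexLe_of_agreeUpTo' {ι : Type*} {v x : ℕ → ℤ} {y : ι → ℕ → ℤ}
    (hx : ∀ m, ∃ k, AgreeUpTo (y k) x m) (hv : ∀ k, LexLe (y k) v) : LexLe x v := by
  by_contra h
  obtain ⟨n, hn, hagree, hlt⟩ := lexLt_of_not_lexLe h
  obtain ⟨k, hk⟩ := hx n
  refine LexLt.not_lexLe ⟨n, hn, fun i hi hin => ?_, ?_⟩ (hv k)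
  · rw [hk i hi hin.le]
    exact hagree i hi hin
  · rwa [hk n hn le_rfl]

end LexOrder

section Rounding

variable {F : ℝ → ℤ}

lemma floor_le_sub_of_floor_or_ceil (hF : F = Int.floor ∨ F = Int.ceil) (x y : ℝ) :
    ⌊y⌋ ≤ F (x + y) - F x := by
  rcases hF with rfl | rfl
  · linarith [Int.le_floor_add x y]
  · have := Int.ceil_mono (show x + ⌊y⌋ ≤ x + y by linarith [Int.floor_le y])
    rw [Int.ceil_add_intCast] at this
    linarith

lemma sub_le_ceil_of_floor_or_ceil (hF : F = Int.floor ∨ F = Int.ceil) (x y : ℝ) :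
    F (x + y) - F x ≤ ⌈y⌉ := by
  rcases hF with rfl | rfl
  · have := Int.floor_mono (show x + y ≤ x + ⌈y⌉ by linarith [Int.le_ceil y])
    rw [Int.floor_add_intCast] at this
    linarith
  · linarith [Int.ceil_add_le x y]

lemma sub_eq_floor_of_fract_add_fract_lt_one (hF : F = Int.floor ∨ F = Int.ceil) {x y : ℝ}
    (hx : 0 < Int.fract x) (hxy : Int.fract x + Int.fract y < 1) : F (x + y) - F x = ⌊y⌋ := by
  have ex := Int.floor_add_fract x
  have ey := Int.floor_add_fract y
  have hy := Int.fract_nonneg y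
  rcases hF with rfl | rfl
  · rw [sub_eq_iff_eq_add', Int.floor_eq_iff]
    push_cast
    constructor <;> linarith
  · have h₁ : ⌈x⌉ = ⌊x⌋ + 1 := by
      rw [Int.ceil_eq_iff]
      push_cast
      constructor <;> linarith [Int.fract_lt_one x]
    have h₂ : ⌈x + y⌉ = ⌊x⌋ + ⌊y⌋ + 1 := by
      rw [Int.ceil_eq_iff]
      push_cast
      constructor <;> linarith
    omega

lemma sub_eq_ceil_of_one_lt_fract_add_fract (hF : F = Int.floor ∨ F = Int.ceil) {x y : ℝ}
    (hxy : 1 < Int.fract x + Int.fract y) : F (x + y) - F x = ⌈y⌉ := by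
  have ex := Int.floor_add_fract x
  have ey := Int.floor_add_fract y
  have hx := Int.fract_lt_one x
  have hy := Int.fract_lt_one y
  have h₀ : ⌈y⌉ = ⌊y⌋ + 1 := by
    rw [Int.ceil_eq_iff]
    push_cast
    constructor <;> linarith
  rcases hF with rfl | rfl
  · have : ⌊x + y⌋ = ⌊x⌋ + ⌊y⌋ + 1 := by
      rw [Int.floor_eq_iff]
      push_cast
      constructor <;> linarith
    omega
  · have h₁ : ⌈x⌉ = ⌊x⌋ + 1 := by
      rw [Int.ceil_eq_iff]
      push_cast
      constructor <;> linarith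
    have h₂ : ⌈x + y⌉ = ⌊x⌋ + ⌊y⌋ + 2 := by
      rw [Int.ceil_eq_iff]
      push_cast
      constructor <;> linarith
    omega

end Rounding

def mechWord (F : ℝ → ℤ) (θ ρ : ℝ) : ℕ → ℤ :=
  fun n => F ((n + 1) * θ + ρ) - F (n * θ + ρ)

lemma blockSum_mechWord (F : ℝ → ℤ) (θ ρ : ℝ) (k n : ℕ) :
    blockSum (mechWord F θ ρ) k n = F ((k + 1) * θ + ρ + n * θ) - F ((k + 1) * θ + ρ) := by
  induction n with
  | zero => simp [blockSum_zero]
  | succ n ih =>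
    rw [blockSum_succ, ih, mechWord]
    push_cast
    rw [show ((k : ℝ) + n + 1) * θ + ρ = (k + 1) * θ + ρ + n * θ by ring,
      show ((k : ℝ) + n + 1 + 1) * θ + ρ = (k + 1) * θ + ρ + (n + 1) * θ by ring]
    ring

lemma isSturmian_iff {θ : ℝ} {w : ℕ → ℤ} :
    IsSturmian θ w ↔ Irrational θ ∧ θ ∈ Set.Ioo 0 1 ∧
      ∃ F ρ, (F = Int.floor ∨ F = Int.ceil) ∧ EqW w (mechWord F θ ρ) := by
  refine and_congr_right fun _ => and_congr_right fun _ => ⟨?_, ?_⟩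
  · rintro ⟨ρ, h | h⟩
    exacts [⟨_, ρ, Or.inl rfl, h⟩, ⟨_, ρ, Or.inr rfl, h⟩]
  · rintro ⟨F, ρ, rfl | rfl, h⟩
    exacts [⟨ρ, Or.inl h⟩, ⟨ρ, Or.inr h⟩]

lemma charWord_eq_mechWord (θ : ℝ) : charWord θ = mechWord Int.floor θ 0 := by
  ext n
  simp [charWord, mechWord]

lemma isBinary_charWord {θ : ℝ} (h : θ ∈ Set.Ioo 0 1) : IsBinary (charWord θ) := by
  intro n
  have h₀ := floor_le_sub_of_floor_or_ceil (Or.inl rfl) (n * θ) θ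
  have h₁ := sub_le_ceil_of_floor_or_ceil (Or.inl rfl) (n * θ) θ
  have hceil : ⌈θ⌉ = 1 := Int.ceil_eq_iff.2 ⟨by norm_num [h.1], by norm_num [h.2.le]⟩
  rw [Int.floor_eq_zero_iff.2 ⟨h.1.le, h.2⟩] at h₀
  rw [hceil] at h₁
  simp only [charWord, add_mul, one_mul]
  omega

lemma blockSum_prepend (a : ℤ) (s : ℕ → ℤ) (n : ℕ) :
    blockSum (Prepend a 1 s) 0 (n + 1) = a + blockSum s 0 n := by
  rw [blockSum, sum_range_succ', add_comm]
  simp [Prepend, blockSum]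

lemma blockSum_prepend_zero_charWord {θ : ℝ} (h : θ ∈ Set.Ioo 0 1) (n : ℕ) :
    blockSum (Prepend 0 1 (charWord θ)) 0 n = ⌊n * θ⌋ := by
  rcases n with _ | n
  · simp [blockSum_zero]
  · rw [blockSum_prepend, charWord_eq_mechWord, blockSum_mechWord]
    simp only [CharP.cast_eq_zero, zero_add, one_mul, add_zero, Nat.cast_succ, add_mul,
      Int.floor_eq_zero_iff.2 ⟨h.1.le, h.2⟩]
    rw [sub_zero, add_comm]

lemma blockSum_prepend_one_charWord {θ : ℝ} (hθ : Irrational θ) (h : θ ∈ Set.Ioo 0 1)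
    (n : ℕ) :
    blockSum (Prepend 1 1 (charWord θ)) 0 n = ⌈n * θ⌉ := by
  rcases n with _ | n
  · simp [blockSum_zero]
  · have hceil : ⌈(n + 1 : ℕ) * θ⌉ = ⌊(n + 1 : ℕ) * θ⌋ + 1 := by
      refine (Int.ceil_eq_floor_add_one_iff_notMem _).2 fun ⟨m, hm⟩ => ?_
      exact (hθ.natCast_mul n.succ_ne_zero).ne_int m hm.symm
    rw [hceil, blockSum_prepend, charWord_eq_mechWord, blockSum_mechWord]
    simp only [CharP.cast_eq_zero, zero_add, one_mul, add_zero, Nat.cast_succ, add_mul,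
      Int.floor_eq_zero_iff.2 ⟨h.1.le, h.2⟩]
    rw [sub_zero, add_comm θ, add_comm]

lemma exists_nat_fract_add_mul_mem {θ : ℝ} (hθ : Irrational θ) (x : ℝ) {a b : ℝ}
    (ha : 0 ≤ a) (hab : a < b) (hb : b ≤ 1) :
    ∃ k : ℕ, Int.fract (x + k * θ) ∈ Set.Ioo a b := by
  have hdense : DenseRange (fun k : ℕ => k • (θ : AddCircle (1 : ℝ))) :=
    denseRange_zsmul_iff_nsmul.1 (AddCircle.denseRange_zsmul_coe_iff.2 (by simpa using hθ))
  obtain ⟨k, y, hy, hky⟩ := hdense.exists_mem_open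
    (QuotientAddGroup.isOpenMap_coe _ (isOpen_Ioo (a := a - x) (b := b - x)))
    ⟨_, ⟨(a + b) / 2 - x, ⟨by linarith, by linarith⟩, rfl⟩⟩
  obtain ⟨m, hm⟩ : ∃ m : ℤ, m • (1 : ℝ) = -y + k * θ := by
    rw [← AddCircle.coe_nsmul, nsmul_eq_mul] at hky
    exact AddSubgroup.mem_zmultiples_iff.1 (QuotientAddGroup.eq.1 hky)
  refine ⟨k, ?_⟩
  rw [show x + k * θ = x + y + m by rw [zsmul_eq_mul, mul_one] at hm; linarith,
    Int.fract_add_intCast,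
    Int.fract_eq_self.2 ⟨by linarith [hy.1], by linarith [hy.2]⟩]
  exact ⟨by linarith [hy.1], by linarith [hy.2]⟩

lemma exists_pos_forall_lt {ι : Type*} (s : Finset ι) {f : ι → ℝ}
    (hf : ∀ i ∈ s, 0 < f i) :
    ∃ ε > 0, ∀ i ∈ s, ε < f i := by
  have h : ∀ᶠ ε in nhdsWithin (0 : ℝ) (Set.Ioi 0), ∀ i ∈ s, ε < f i :=
    nhdsWithin_le_nhds ((Filter.eventually_all_finset s).2 fun i hi => eventually_lt_nhds (hf i hi))
  obtain ⟨ε, hε, hpos⟩ := (h.and self_mem_nhdsWithin).exists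
  exact ⟨ε, hpos, hε⟩

namespace IsSturmian

variable {θ : ℝ} {w : ℕ → ℤ}

lemma blockSum_mem_Icc (hs : IsSturmian θ w) (k n : ℕ) :
    blockSum w k n ∈ Set.Icc ⌊n * θ⌋ ⌈n * θ⌉ := by
  obtain ⟨-, -, F, ρ, hF, hw⟩ := isSturmian_iff.1 hs
  rw [blockSum_congr k n hw, blockSum_mechWord]
  exact ⟨floor_le_sub_of_floor_or_ceil hF _ _, sub_le_ceil_of_floor_or_ceil hF _ _⟩

lemma prepend_zero_charWord_lexLe (hs : IsSturmian θ w) (n : ℕ) :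
    LexLe (Prepend 0 1 (charWord θ)) (Shf^[n] w) :=
  lexLe_of_blockSum_le fun m => by
    rw [blockSum_prepend_zero_charWord hs.2.1, blockSum_shf_iterate]
    exact (hs.blockSum_mem_Icc n m).1

lemma lexLe_prepend_one_charWord (hs : IsSturmian θ w) (n : ℕ) :
    LexLe (Shf^[n] w) (Prepend 1 1 (charWord θ)) :=
  lexLe_of_blockSum_le fun m => by
    rw [blockSum_prepend_one_charWord hs.1 hs.2.1, blockSum_shf_iterate]
    exact (hs.blockSum_mem_Icc n m).2

lemma exists_agreeUpTo_prepend_zero_charWord (hs : IsSturmian θ w) (m : ℕ) :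
    ∃ k, AgreeUpTo (Shf^[k] w) (Prepend 0 1 (charWord θ)) m := by
  obtain ⟨hθ, h01, F, ρ, hF, hw⟩ := isSturmian_iff.1 hs
  obtain ⟨ε, hε, hεm⟩ := exists_pos_forall_lt (range (m + 1))
    (f := fun j => 1 - Int.fract (j * θ)) fun j _ => by linarith [Int.fract_lt_one (j * θ)]
  have hε1 : ε < 1 := by simpa using hεm 0 (by simp)
  obtain ⟨k, hk⟩ := exists_nat_fract_add_mul_mem hθ (θ + ρ) le_rfl hε hε1.le
  refine ⟨k, agreeUpTo_of_blockSum_eq fun j hj => ?_⟩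
  rw [blockSum_shf_iterate, blockSum_congr k j hw, blockSum_mechWord,
    blockSum_prepend_zero_charWord h01,
    show ((k : ℝ) + 1) * θ + ρ = θ + ρ + k * θ by ring]
  refine sub_eq_floor_of_fract_add_fract_lt_one hF hk.1 ?_
  linarith [hk.2, hεm j (mem_range.2 (by omega))]

lemma exists_agreeUpTo_prepend_one_charWord (hs : IsSturmian θ w) (m : ℕ) :
    ∃ k, AgreeUpTo (Shf^[k] w) (Prepend 1 1 (charWord θ)) m := by
  obtain ⟨hθ, h01, F, ρ, hF, hw⟩ := isSturmian_iff.1 hs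
  obtain ⟨ε, hε, hεm⟩ := exists_pos_forall_lt (range (m + 1))
    (f := fun j => Int.fract ((j + 1) * θ)) fun j _ => by
      rw [Int.fract_pos]
      exact fun h => (hθ.natCast_mul j.succ_ne_zero).ne_int _ (by exact_mod_cast h)
  have hε1 : ε < 1 := (hεm 0 (by simp)).trans (Int.fract_lt_one _)
  obtain ⟨k, hk⟩ := exists_nat_fract_add_mul_mem hθ (θ + ρ) (a := 1 - ε) (by linarith)
    (by linarith) le_rfl
  refine ⟨k, agreeUpTo_of_blockSum_eq fun j hj => ?_⟩
  rw [blockSum_shf_iterate, blockSum_congr k j hw, blockSum_mechWord,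
    blockSum_prepend_one_charWord hθ h01,
    show ((k : ℝ) + 1) * θ + ρ = θ + ρ + k * θ by ring]
  rcases j with _ | j
  · simp
  refine sub_eq_ceil_of_one_lt_fract_add_fract hF ?_
  have := hεm j (mem_range.2 (by omega))
  push_cast at this ⊢
  linarith [hk.1]

lemma lexLe_prepend_zero_charWord {v : ℕ → ℤ} (hs : IsSturmian θ w)
    (hv : ∀ n, LexLe v (Shf^[n] w)) : LexLe v (Prepend 0 1 (charWord θ)) :=
  lexLe_of_forall_lexLe_of_agreeUpTo hs.exists_agreeUpTo_prepend_zero_charWord hv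

lemma prepend_one_charWord_lexLe {v : ℕ → ℤ} (hs : IsSturmian θ w)
    (hv : ∀ n, LexLe (Shf^[n] w) v) : LexLe (Prepend 1 1 (charWord θ)) v :=
  lexLe_of_forall_lexLe_of_agreeUpTo' hs.exists_agreeUpTo_prepend_one_charWord hv

lemma eqW_charWord {u : ℕ → ℤ} (hs : IsSturmian θ w)
    (hu : ∀ n, LexLe (Prepend 0 1 u) (Shf^[n] w) ∧ LexLe (Shf^[n] w) (Prepend 1 1 u)) :
    EqW u (charWord θ) :=
  .of_lexLe_of_lexLe (hs.lexLe_prepend_zero_charWord fun n => (hu n).1).of_prepend_le_prepend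
    (hs.prepend_one_charWord_lexLe fun n => (hu n).2).of_prepend_le_prepend

end IsSturmian

def IsBalancedWord (w : ℕ → ℤ) : Prop := ∀ n k j, blockSum w k n ≤ blockSum w j n + 1

lemma exists_one_one_zero_zero_of_not_isBalancedWord {w : ℕ → ℤ} (hb : IsBinary w)
    (h : ¬ IsBalancedWord w) :
    ∃ n k j, 2 ≤ n ∧ w (k + 1) = 1 ∧ w (j + 1) = 0 ∧ w (k + n) = 1 ∧ w (j + n) = 0 ∧
      ∀ t, 2 ≤ t → t < n → w (k + t) = w (j + t) := by
  classical
  have hex : ∃ n k j, blockSum w j n + 1 < blockSum w k n := by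
    simpa [IsBalancedWord] using h
  have hleast : ∃ n, (∃ k j, blockSum w j n + 1 < blockSum w k n) ∧
      ∀ t < n, ∀ k j, blockSum w k t ≤ blockSum w j t + 1 :=
    ⟨Nat.find hex, Nat.find_spec hex, fun t ht k j =>
      not_lt.1 fun h => Nat.find_min hex ht ⟨k, j, h⟩⟩
  obtain ⟨n, ⟨k, j, hkj⟩, hmin⟩ := hleast
  -- Minimality pins the weight difference of the two prefixes of length `t` to exactly `1`.
  have hdiff : ∀ t, 1 ≤ t → t < n → blockSum w k t = blockSum w j t + 1 := by
    intro t ht1 htn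
    have hk := blockSum_add w k (n - t) t
    have hj := blockSum_add w j (n - t) t
    rw [Nat.add_sub_cancel' htn.le] at hk hj
    have := hmin (n - t) (by omega) (k + t) (j + t)
    have := hmin t htn k j
    omega
  have hletter : ∀ t, w (k + t + 1) - w (j + t + 1) =
      (blockSum w k (t + 1) - blockSum w j (t + 1)) - (blockSum w k t - blockSum w j t) := by
    intro t
    rw [blockSum_succ, blockSum_succ]
    ring
  have hn : 2 ≤ n := by
    by_contra hn
    interval_cases h : n
    · simp [blockSum_zero] at hkj
    · rw [blockSum_one, blockSum_one] at hkj
      rcases hb (k + 1) with h | h <;> rcases hb (j + 1) with h' | h' <;> omega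
  have hone : ∀ a b, 1 ≤ w a - w b → w a = 1 ∧ w b = 0 := fun a b h => by
    rcases hb a with h₁ | h₁ <;> rcases hb b with h₂ | h₂ <;> omega
  have hfirst : 1 ≤ w (k + 1) - w (j + 1) := by
    have := hletter 0
    rw [zero_add, hdiff 1 le_rfl (by omega), blockSum_zero, blockSum_zero, add_zero, add_zero]
      at this
    omega
  have hlast : 1 ≤ w (k + n) - w (j + n) := by
    have := hletter (n - 1)
    rw [hdiff (n - 1) (by omega) (by omega), Nat.sub_add_cancel (by omega),
      add_assoc, add_assoc, Nat.sub_add_cancel (by omega)] at this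
    omega
  refine ⟨n, k, j, hn, (hone _ _ hfirst).1, (hone _ _ hfirst).2, (hone _ _ hlast).1,
    (hone _ _ hlast).2, fun t ht2 htn => ?_⟩
  have := hletter (t - 1)
  rw [hdiff (t - 1) (by omega) (by omega), Nat.sub_add_cancel (by omega), hdiff t (by omega) htn,
    add_assoc, add_assoc, Nat.sub_add_cancel (by omega)] at this
  omega

lemma isBalancedWord_of_forall_lexLe {w u : ℕ → ℤ} (hb : IsBinary w)
    (hu : ∀ n, LexLe (Prepend 0 1 u) (Shf^[n] w) ∧ LexLe (Shf^[n] w) (Prepend 1 1 u)) :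
    IsBalancedWord w := by
  by_contra h
  obtain ⟨n, k, j, hn, hk1, hj1, hkn, hjn, hmid⟩ :=
    exists_one_one_zero_zero_of_not_isBalancedWord hb h
  -- `w` has factors `1x1` at `k` and `0x0` at `j`, so `x1… ≤ u ≤ x0…`.
  have hk : LexLe (Shf^[k + 1] w) u := by
    rw [Function.iterate_succ_apply']
    exact (hu k).2.shf_le_of_le_prepend (by rw [shf_iterate_apply, add_comm, hk1])
  have hj : LexLe u (Shf^[j + 1] w) := by
    rw [Function.iterate_succ_apply']
    exact (hu j).1.le_shf_of_prepend_le (by rw [shf_iterate_apply, add_comm, hj1])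
  refine LexLt.not_lexLe ⟨n - 1, by omega, fun i hi hin => ?_, ?_⟩ (hk.trans hj)
  · simp only [shf_iterate_apply]
    rw [show i + (j + 1) = j + (i + 1) by ring, show i + (k + 1) = k + (i + 1) by ring,
      hmid (i + 1) (by omega) (by omega)]
  · simp only [shf_iterate_apply]
    rw [show n - 1 + (j + 1) = j + n by omega, show n - 1 + (k + 1) = k + n by omega, hkn, hjn]
    norm_num

lemma IsBalancedWord.exists_abs_blockSum_sub_le {w : ℕ → ℤ} (h : IsBalancedWord w) :
    ∃ θ : ℝ, ∀ k n, |(blockSum w k n : ℝ) - n * θ| ≤ 1 := by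
  -- Cut a factor of length `n * m` into `n` blocks of length `m`, or into `m` blocks of length `n`.
  have key : ∀ k j m n : ℕ, (n : ℤ) * (blockSum w k m - 1) ≤ m * (blockSum w j n + 1) := by
    intro k j m n
    calc (n : ℤ) * (blockSum w k m - 1)
        ≤ blockSum w j (n * m) := by
          have := card_nsmul_le_sum (range n) (fun i => blockSum w (j + i * m) m) _ fun i _ =>
            show blockSum w k m - 1 ≤ _ by linarith [h m k (j + i * m)]
          rwa [card_range, nsmul_eq_mul, ← blockSum_mul] at this
      _ = blockSum w j (m * n) := by rw [mul_comm]
      _ ≤ m * (blockSum w j n + 1) := by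
          have := sum_le_card_nsmul (range m) (fun i => blockSum w (j + i * n) n) _ fun i _ =>
            h n (j + i * n) j
          rwa [card_range, nsmul_eq_mul, ← blockSum_mul] at this
  set g : ℕ × ℕ → ℝ := fun p => ((blockSum w p.1 (p.2 + 1) : ℝ) - 1) / (p.2 + 1)
  have hg : ∀ p j n, 0 < n → g p ≤ ((blockSum w j n : ℝ) + 1) / n := by
    rintro ⟨k, m⟩ j n hn
    rw [div_le_div_iff₀ (by positivity) (by positivity)]
    exact_mod_cast (mul_comm _ _).le.trans ((key k j (m + 1) n).trans_eq (by push_cast; ring))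
  have hbdd : BddAbove (Set.range g) := ⟨_, Set.forall_mem_range.2 fun p => hg p 0 1 one_pos⟩
  refine ⟨⨆ p, g p, fun k n => ?_⟩
  rcases Nat.eq_zero_or_pos n with rfl | hn
  · simp [blockSum_zero]
  have hn' : (0 : ℝ) < n := by exact_mod_cast hn
  have hlow : g (k, n - 1) ≤ ⨆ p, g p := le_ciSup hbdd (k, n - 1)
  have hup : ⨆ p, g p ≤ ((blockSum w k n : ℝ) + 1) / n := ciSup_le fun p => hg p k n hn
  simp only [g, Nat.cast_sub hn, Nat.cast_one, sub_add_cancel, Nat.sub_add_cancel hn] at hlow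
  rw [div_le_iff₀ hn'] at hlow
  rw [le_div_iff₀ hn'] at hup
  rw [abs_le]
  constructor <;> linarith

lemma exists_forall_ge_eq_zero_of_sum_le_one {x : ℕ → ℤ} {q : ℕ} (hq : 0 < q)
    (hx : ∀ k, 0 ≤ x k) (hsum : ∀ k J, ∑ i ∈ range J, x (k + i * q) ≤ 1) :
    ∃ K, ∀ k, K ≤ k → x k = 0 := by
  have hsep : ∀ a b, a < b → a % q = b % q → x a = 0 ∨ x b = 0 := by
    intro a b hab hmod
    obtain ⟨J, hJ⟩ := (Nat.modEq_iff_dvd' hab.le).1 hmod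
    have hJ0 : J ≠ 0 := by rintro rfl; omega
    obtain rfl : b = a + J * q := by rw [mul_comm]; omega
    have h₂ := add_le_sum (s := range (J + 1)) (f := fun i => x (a + i * q)) (fun i _ => hx _)
      (mem_range.2 J.succ_pos) (mem_range.2 J.lt_succ_self) hJ0.symm
    rw [zero_mul, add_zero] at h₂
    have := hsum a (J + 1)
    have := hx a
    have := hx (a + J * q)
    omega
  have hfin : {k | x k ≠ 0}.Finite := by
    refine Set.Finite.of_finite_image ((Set.finite_Iio q).subset ?_) (f := (· % q)) ?_
    · rintro _ ⟨k, -, rfl⟩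
      exact Nat.mod_lt k hq
    · intro a ha b hb hab
      by_contra hne
      rcases lt_or_gt_of_ne hne with h | h
      · exact (hsep a b h hab).elim ha hb
      · exact (hsep b a h hab.symm).elim hb ha
  obtain ⟨K, hK⟩ := hfin.bddAbove
  exact ⟨K + 1, fun k hk => by_contra fun h => by have := hK h; omega⟩

lemma IsBalancedWord.irrational {w : ℕ → ℤ} {θ : ℝ} (hbal : IsBalancedWord w)
    (hap : Aperiodic w) (hθ : ∀ k n, |(blockSum w k n : ℝ) - n * θ| ≤ 1) :
    Irrational θ := by
  -- For `θ = p / q` the excesses `e k` have one sign and sum to at most `1` along each residue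
  -- class mod `q`, so they eventually vanish and `w` becomes `q`-periodic.
  rintro ⟨r, rfl⟩
  set q := r.den
  set p := r.num
  have hqr : (q : ℝ) * r = p := by exact_mod_cast (mul_comm _ _).trans r.mul_den_eq_num
  set e : ℕ → ℤ := fun k => blockSum w k q - p
  have hblock : ∀ k J, |∑ i ∈ range J, e (k + i * q)| ≤ 1 := by
    intro k J
    have h := hθ k (J * q)
    rw [Nat.cast_mul, mul_assoc, hqr, blockSum_mul] at h
    have : |((∑ i ∈ range J, e (k + i * q) : ℤ) : ℝ)| ≤ 1 := by
      simpa [e, sum_sub_distrib] using h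
    exact_mod_cast this
  have hsign : (∀ k, 0 ≤ e k) ∨ (∀ k, e k ≤ 0) := by
    refine or_iff_not_imp_left.2 fun h k => ?_
    obtain ⟨a, ha⟩ := not_forall.1 h
    have := hbal q k a
    simp only [e] at ha ⊢
    omega
  obtain ⟨K, hK⟩ : ∃ K, ∀ k, K ≤ k → e k = 0 := by
    rcases hsign with h | h
    · exact exists_forall_ge_eq_zero_of_sum_le_one r.pos h fun k J =>
        (le_abs_self _).trans (hblock k J)
    · obtain ⟨K, hK⟩ := exists_forall_ge_eq_zero_of_sum_le_one (x := fun k => -e k) r.pos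
        (fun k => neg_nonneg.2 (h k)) fun k J => by
          simpa [sum_neg_distrib] using (neg_le_abs _).trans (hblock k J)
      exact ⟨K, fun k hk => neg_eq_zero.1 (hK k hk)⟩
  refine hap ⟨q, r.pos, K + 1, by omega, fun n hn => ?_⟩
  have h₁ := hK (n - 1) (by omega)
  have h₂ := hK n (by omega)
  have := blockSum_succ_left w (n - 1) q
  rw [Nat.sub_add_cancel (by omega)] at this
  simp only [e] at h₁ h₂
  rw [show n - 1 + q + 1 = n + q by omega] at this
  omega

lemma abs_blockSum_sub_lt_one {w : ℕ → ℤ} {θ : ℝ} (hθ : Irrational θ)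
    (h : ∀ k n, |(blockSum w k n : ℝ) - n * θ| ≤ 1) (k : ℕ) {n : ℕ} (hn : n ≠ 0) :
    |(blockSum w k n : ℝ) - n * θ| < 1 := by
  refine (h k n).lt_of_ne fun h₁ => ?_
  have hirr := (hθ.natCast_mul hn).intCast_sub (blockSum w k n)
  rcases (abs_eq zero_le_one).1 h₁ with h₁ | h₁
  · exact hirr.ne_one h₁
  · exact hirr.ne_int (-1) (by simpa using h₁)

lemma mem_Ioo_of_abs_sub_lt_one {w : ℕ → ℤ} {θ : ℝ} (hb : IsBinary w) (hap : Aperiodic w)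
    (h : ∀ k, |(w (k + 1) : ℝ) - θ| < 1) : θ ∈ Set.Ioo 0 1 := by
  obtain ⟨n, hne⟩ : ∃ n, w (n + 1) ≠ w (n + 1 + 1) := by
    by_contra! hc
    refine hap ⟨1, le_rfl, 1, le_rfl, fun m hm => ?_⟩
    obtain ⟨n, rfl⟩ : ∃ n, m = n + 1 := ⟨m - 1, by omega⟩
    exact hc n
  obtain ⟨k₀, k₁, h₀, h₁⟩ : ∃ k₀ k₁, w (k₀ + 1) = 0 ∧ w (k₁ + 1) = 1 := by
    rcases hb (n + 1) with h₃ | h₃ <;> rcases hb (n + 1 + 1) with h₄ | h₄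
    · exact absurd (h₃.trans h₄.symm) hne
    · exact ⟨n, n + 1, h₃, h₄⟩
    · exact ⟨n + 1, n, h₄, h₃⟩
    · exact absurd (h₃.trans h₄.symm) hne
  have hθ₀ := h k₀
  have hθ₁ := h k₁
  rw [h₀, Int.cast_zero, abs_lt] at hθ₀
  rw [h₁, Int.cast_one, abs_lt] at hθ₁
  exact ⟨by linarith, by linarith⟩

lemma exists_forall_mem_Ico_or_forall_mem_Ioc {d : ℕ → ℝ}
    (hd : ∀ a b, a ≠ b → |d a - d b| < 1) :
    ∃ ρ, (∀ n, ρ ∈ Set.Ico (d n) (d n + 1)) ∨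
      (∀ n, ρ ∈ Set.Ioc (d n) (d n + 1)) := by
  have hle : ∀ a b, d a ≤ d b + 1 := fun a b => by
    rcases eq_or_ne a b with rfl | hab
    · linarith
    · linarith [(abs_lt.1 (hd a b hab)).2]
  have hbdd : BddAbove (Set.range d) := ⟨d 0 + 1, Set.forall_mem_range.2 fun a => hle a 0⟩
  refine ⟨⨆ n, d n, ?_⟩
  by_cases hmax : ∃ m, d m = ⨆ n, d n
  · obtain ⟨m, hm⟩ := hmax
    refine Or.inl fun n => ⟨le_ciSup hbdd n, ?_⟩
    rw [← hm]
    rcases eq_or_ne m n with rfl | hmn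
    · linarith
    · linarith [(abs_lt.1 (hd m n hmn)).2]
  · exact Or.inr fun n =>
      ⟨(le_ciSup hbdd n).lt_of_ne fun h => hmax ⟨n, h⟩, ciSup_le fun a => hle a n⟩

lemma eqW_mechWord_of_blockSum_eq {w : ℕ → ℤ} {F : ℝ → ℤ} {θ ρ : ℝ}
    (h : ∀ n : ℕ, F ((n + 1) * θ + ρ) = blockSum w 0 n) : EqW w (mechWord F θ ρ) := by
  intro i hi
  obtain ⟨n, rfl⟩ : ∃ n, i = n + 1 := ⟨i - 1, by omega⟩
  rw [mechWord, h (n + 1), Nat.cast_succ, h n, blockSum_succ, zero_add]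
  ring

lemma isSturmian_of_abs_blockSum_sub_lt_one {w : ℕ → ℤ} {θ : ℝ} (hθ : Irrational θ)
    (h01 : θ ∈ Set.Ioo 0 1) (h : ∀ k n, n ≠ 0 → |(blockSum w k n : ℝ) - n * θ| < 1) :
    IsSturmian θ w := by
  set d : ℕ → ℝ := fun n => blockSum w 0 n - (n + 1) * θ
  have hd : ∀ a b, b < a → |d a - d b| < 1 := by
    intro a b hba
    have hsplit := blockSum_add w 0 (a - b) b
    rw [Nat.add_sub_cancel' hba.le, zero_add] at hsplit
    convert h b (a - b) (by omega) using 2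
    simp only [d, hsplit, Int.cast_add, Nat.cast_sub hba.le]
    ring
  obtain ⟨ρ, hρ | hρ⟩ := exists_forall_mem_Ico_or_forall_mem_Ioc fun a b hab =>
    (lt_or_gt_of_ne hab).elim (fun hlt => abs_sub_comm (d a) (d b) ▸ hd b a hlt) (hd a b)
  · refine isSturmian_iff.2 ⟨hθ, h01, Int.floor, ρ, Or.inl rfl,
      eqW_mechWord_of_blockSum_eq fun n => ?_⟩
    have := hρ n
    rw [Int.floor_eq_iff]
    constructor <;> linarith [this.1, this.2]
  · refine isSturmian_iff.2 ⟨hθ, h01, Int.ceil, ρ - 1, Or.inr rfl,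
      eqW_mechWord_of_blockSum_eq fun n => ?_⟩
    have := hρ n
    rw [Int.ceil_eq_iff]
    constructor <;> linarith [this.1, this.2]

lemma exists_isSturmian_of_forall_lexLe {w u : ℕ → ℤ} (hb : IsBinary w) (hap : Aperiodic w)
    (hu : ∀ n, LexLe (Prepend 0 1 u) (Shf^[n] w) ∧ LexLe (Shf^[n] w) (Prepend 1 1 u)) :
    ∃ θ, IsSturmian θ w := by
  have hbal := isBalancedWord_of_forall_lexLe hb hu
  obtain ⟨θ, hθ⟩ := hbal.exists_abs_blockSum_sub_le
  have hirr := hbal.irrational hap hθ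
  have hlt := fun k n (hn : n ≠ 0) => abs_blockSum_sub_lt_one hirr hθ k hn
  refine ⟨θ, isSturmian_of_abs_blockSum_sub_lt_one hirr
    (mem_Ioo_of_abs_sub_lt_one hb hap fun k => ?_) hlt⟩
  simpa [blockSum_one] using hlt k 1 one_ne_zero

theorem stmt19 (w : ℕ → ℤ) (hb : IsBinary w) (hap : Aperiodic w) :
    ((∃ θ, IsSturmian θ w) ↔
      ∃ u, IsBinary u ∧ ∀ n : ℕ,
        LexLe (Prepend 0 1 u) (Shf^[n] w) ∧ LexLe (Shf^[n] w) (Prepend 1 1 u)) ∧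
    (∀ θ, IsSturmian θ w →
      (∀ u, IsBinary u →
        (∀ n : ℕ, LexLe (Prepend 0 1 u) (Shf^[n] w) ∧ LexLe (Shf^[n] w) (Prepend 1 1 u)) →
        EqW u (charWord θ)) ∧
      (∀ n : ℕ, LexLe (Prepend 0 1 (charWord θ)) (Shf^[n] w)) ∧
      (∀ v, IsBinary v → (∀ n : ℕ, LexLe v (Shf^[n] w)) →
        LexLe v (Prepend 0 1 (charWord θ))) ∧
      (∀ n : ℕ, LexLe (Shf^[n] w) (Prepend 1 1 (charWord θ))) ∧
      (∀ v, IsBinary v → (∀ n : ℕ, LexLe (Shf^[n] w) v) →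
        LexLe (Prepend 1 1 (charWord θ)) v)) := by
  refine ⟨⟨fun ⟨θ, hs⟩ => ?_, fun ⟨_, _, hu⟩ => exists_isSturmian_of_forall_lexLe hb hap hu⟩,
    fun θ hs => ?_⟩
  · exact ⟨charWord θ, isBinary_charWord hs.2.1,
      fun n => ⟨hs.prepend_zero_charWord_lexLe n, hs.lexLe_prepend_one_charWord n⟩⟩
  · exact ⟨fun u _ hu => hs.eqW_charWord hu, hs.prepend_zero_charWord_lexLe,
      fun v _ hv => hs.lexLe_prepend_zero_charWord hv, hs.lexLe_prepend_one_charWord,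
      fun v _ hv => hs.prepend_one_charWord_lexLe hv⟩
end
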